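/- arXiv:1402.1559 — 2 statements merged into one kernel-verified Lean document; each statement's English description precedes it below -/
import Mathlib

section
/- Let F be a p×k complex matrix, G a q×k complex matrix, γ > 0 a real number, and G_o an invertible k×k complex matrix satisfying G_oᴴG_o = γ²·I − GᴴG. If ‖G‖ < γ and ‖F·G_o⁻¹‖ ≤ 1, then the stacked matrix satisfies ‖[F; G]‖ ≤ γ. -/
/-!
The factorization `G_oᴴ G_o + Gᴴ G = γ² I` says that `[G_o; G]` is `γ` times an isometry, so
`‖G_o x‖² + ‖G x‖² = γ² ‖x‖²`. Writing `F = (F G_o⁻¹) G_o` gives `‖F x‖ ≤ ‖G_o x‖`, hence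
`‖[F; G] x‖² = ‖F x‖² + ‖G x‖² ≤ γ² ‖x‖²`.
-/

open Matrix

/-- The spectral norm (ℓ²→ℓ² operator norm, largest singular value) of a complex matrix. -/
noncomputable def specNorm {m n : Type*} [Fintype m] [Fintype n] [DecidableEq n]
    (M : Matrix m n ℂ) : ℝ :=
  ‖LinearMap.toContinuousLinearMap (Matrix.toEuclideanLin M)‖

namespace Matrix

variable {𝕜 : Type*} [RCLike 𝕜] {l m n : Type*} [Fintype l] [Fintype m]

theorem conjTranspose_fromRows_mul_self (A : Matrix l n 𝕜) (B : Matrix m n 𝕜) :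
    (fromRows A B)ᴴ * fromRows A B = Aᴴ * A + Bᴴ * B := by
  rw [conjTranspose_fromRows_eq_fromCols_conjTranspose, fromCols_mul_fromRows]

variable [Fintype n] [DecidableEq n]

theorem norm_sq_toEuclideanLin_eq_inner [DecidableEq m] (M : Matrix m n 𝕜)
    (x : EuclideanSpace 𝕜 n) :
    (‖toEuclideanLin M x‖ ^ 2 : 𝕜) = inner 𝕜 x (toEuclideanLin (Mᴴ * M) x) := by
  rw [toLpLin_mul_same, LinearMap.comp_apply, toEuclideanLin_conjTranspose_eq_adjoint,
    LinearMap.adjoint_inner_right, inner_self_eq_norm_sq_to_K]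

theorem norm_sq_toEuclideanLin_of_conjTranspose_mul_self_eq_smul_one [DecidableEq m]
    {M : Matrix m n 𝕜} {c : ℝ} (hM : Mᴴ * M = (c : 𝕜) • 1) (x : EuclideanSpace 𝕜 n) :
    ‖toEuclideanLin M x‖ ^ 2 = c * ‖x‖ ^ 2 := by
  have h := norm_sq_toEuclideanLin_eq_inner M x
  rw [hM, map_smul, toLpLin_one, LinearMap.smul_apply, LinearMap.id_apply, inner_smul_right,
    inner_self_eq_norm_sq_to_K] at h
  exact_mod_cast h

theorem norm_sq_toEuclideanLin_fromRows (A : Matrix l n 𝕜) (B : Matrix m n 𝕜)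
    (x : EuclideanSpace 𝕜 n) :
    ‖toEuclideanLin (fromRows A B) x‖ ^ 2 =
      ‖toEuclideanLin A x‖ ^ 2 + ‖toEuclideanLin B x‖ ^ 2 := by
  simp only [EuclideanSpace.norm_sq_eq, Fintype.sum_sum_type]
  rfl

end Matrix

section specNorm

variable {m n : Type*} [Fintype m] [Fintype n] [DecidableEq n]

theorem norm_toEuclideanLin_le_specNorm_mul (M : Matrix m n ℂ) (x : EuclideanSpace ℂ n) :
    ‖toEuclideanLin M x‖ ≤ specNorm M * ‖x‖ :=
  (LinearMap.toContinuousLinearMap (toEuclideanLin M)).le_opNorm x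

theorem specNorm_le_of_norm_le {M : Matrix m n ℂ} {c : ℝ} (hc : 0 ≤ c)
    (h : ∀ x, ‖toEuclideanLin M x‖ ≤ c * ‖x‖) : specNorm M ≤ c :=
  ContinuousLinearMap.opNorm_le_bound _ hc h

theorem norm_toEuclideanLin_le_specNorm_mul_inv_mul {l : Type*} [Fintype l]
    (F : Matrix l n ℂ) {A : Matrix n n ℂ} (hA : IsUnit A) (x : EuclideanSpace ℂ n) :
    ‖toEuclideanLin F x‖ ≤ specNorm (F * A⁻¹) * ‖toEuclideanLin A x‖ := by
  have hFA : F = F * A⁻¹ * A := by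
    rw [Matrix.mul_assoc, nonsing_inv_mul A ((isUnit_iff_isUnit_det A).mp hA), Matrix.mul_one]
  calc ‖toEuclideanLin F x‖ = ‖toEuclideanLin (F * A⁻¹) (toEuclideanLin A x)‖ := by
        conv_lhs => rw [hFA, toLpLin_mul_same]
        rfl
    _ ≤ specNorm (F * A⁻¹) * ‖toEuclideanLin A x‖ := norm_toEuclideanLin_le_specNorm_mul _ _

end specNorm

theorem specNorm_stacked_le_of_general (p q k : ℕ)
    (F : Matrix (Fin p) (Fin k) ℂ) (G : Matrix (Fin q) (Fin k) ℂ)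
    (γ : ℝ) (hγ : 0 < γ)
    (Go : Matrix (Fin k) (Fin k) ℂ) (hGo : IsUnit Go)
    (hfact : Goᴴ * Go = ((γ : ℂ) ^ 2) • (1 : Matrix (Fin k) (Fin k) ℂ) - Gᴴ * G)
    (hF : specNorm (F * Go⁻¹) ≤ 1) :
    specNorm (Matrix.fromRows F G) ≤ γ := by
  have hIso : (fromRows Go G)ᴴ * fromRows Go G = ((γ ^ 2 : ℝ) : ℂ) • 1 := by
    rw [conjTranspose_fromRows_mul_self, hfact, sub_add_cancel, Complex.ofReal_pow]
  refine specNorm_le_of_norm_le hγ.le fun x => ?_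
  have hFx : ‖toEuclideanLin F x‖ ≤ ‖toEuclideanLin Go x‖ :=
    (norm_toEuclideanLin_le_specNorm_mul_inv_mul F hGo x).trans
      (mul_le_of_le_one_left (norm_nonneg _) hF)
  refine le_of_pow_le_pow_left₀ two_ne_zero (by positivity) ?_
  calc ‖toEuclideanLin (fromRows F G) x‖ ^ 2
      = ‖toEuclideanLin F x‖ ^ 2 + ‖toEuclideanLin G x‖ ^ 2 :=
        norm_sq_toEuclideanLin_fromRows F G x
    _ ≤ ‖toEuclideanLin Go x‖ ^ 2 + ‖toEuclideanLin G x‖ ^ 2 := by gcongr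
    _ = ‖toEuclideanLin (fromRows Go G) x‖ ^ 2 := (norm_sq_toEuclideanLin_fromRows Go G x).symm
    _ = (γ * ‖x‖) ^ 2 :=
        (norm_sq_toEuclideanLin_of_conjTranspose_mul_self_eq_smul_one hIso x).trans
          (mul_pow _ _ _).symm

/-- If `‖G‖ < γ` and `‖F G_o⁻¹‖ ≤ 1`, where `G_o` is invertible with
`G_oᴴ G_o = γ²·I − Gᴴ G`, then `‖[F; G]‖ ≤ γ`. -/
theorem specNorm_stacked_le_of (p q k : ℕ)
    (F : Matrix (Fin p) (Fin k) ℂ) (G : Matrix (Fin q) (Fin k) ℂ)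
    (γ : ℝ) (hγ : 0 < γ)
    (Go : Matrix (Fin k) (Fin k) ℂ) (hGo : IsUnit Go)
    (hfact : Goᴴ * Go = ((γ : ℂ) ^ 2) • (1 : Matrix (Fin k) (Fin k) ℂ) - Gᴴ * G)
    (hG : specNorm G < γ) (hF : specNorm (F * Go⁻¹) ≤ 1) :
    specNorm (Matrix.fromRows F G) ≤ γ :=
  specNorm_stacked_le_of_general p q k F G γ hγ Go hGo hfact hF
end

section
/- Let F : 𝕋 → Matrix p k ℂ and G : 𝕋 → Matrix q k ℂ be continuous, let γ > 0, and let G_o : 𝕋 → Matrix k k ℂ be continuous with G_o(z) invertible and G_o(z)ᴴG_o(z) = γ²·I − G(z)ᴴG(z) for all z ∈ 𝕋. If the stacked function satisfies ‖[F; G]‖∞ < γ, then ‖G‖∞ < γ and ‖F·G_o⁻¹‖∞ < 1 (where F·G_o⁻¹ denotes the continuous function z ↦ F(z)·G_o(z)⁻¹). -/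
/-!
Everything is pointwise on the circle. Stacking gives `‖[A; B] v‖² = ‖A v‖² + ‖B v‖²`, so
`‖B‖ ≤ ‖[A; B]‖ =: s`. The factorization says `‖C u‖² + ‖B u‖² = γ² ‖u‖²`, hence for `s ≤ γ`
`γ² ‖A u‖² ≤ γ² (s² ‖u‖² - ‖B u‖²) ≤ s² (γ² ‖u‖² - ‖B u‖²) = s² ‖C u‖²`,
i.e. `‖A C⁻¹‖ ≤ s / γ`. Continuity makes the suprema finite, and the strict bound `sup s < γ`
passes to both conclusions.
-/

open Matrix

/-- The `H∞` norm of a matrix-valued function on the unit circle: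
`‖F‖∞ = sup_{z ∈ 𝕋} ‖F(z)‖`. -/
noncomputable def hinfNorm {m n : Type*} [Fintype m] [Fintype n] [DecidableEq n]
    (F : Circle → Matrix m n ℂ) : ℝ :=
  ⨆ z : Circle, specNorm (F z)

section SpecNorm

variable {m n : Type*} [Fintype m] [Fintype n] [DecidableEq n]

-- `specNorm` is definitionally Mathlib's L2 operator norm, whose topology is the entrywise one.
lemma continuous_specNorm : Continuous (specNorm : Matrix m n ℂ → ℝ) := by
  open scoped Matrix.Norms.L2Operator in exact continuous_norm

lemma norm_toEuclideanLin_le (M : Matrix m n ℂ) (v : EuclideanSpace ℂ n) :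
    ‖toEuclideanLin M v‖ ≤ specNorm M * ‖v‖ :=
  (LinearMap.toContinuousLinearMap (toEuclideanLin M)).le_opNorm v

lemma specNorm_le_of_forall_norm_le {M : Matrix m n ℂ} {c : ℝ} (hc : 0 ≤ c)
    (h : ∀ v, ‖toEuclideanLin M v‖ ≤ c * ‖v‖) : specNorm M ≤ c :=
  ContinuousLinearMap.opNorm_le_bound _ hc h

lemma norm_toEuclideanLin_sq (M : Matrix m n ℂ) (v : EuclideanSpace ℂ n) :
    ‖toEuclideanLin M v‖ ^ 2 = RCLike.re (inner ℂ v (toEuclideanLin (Mᴴ * M) v)) := by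
  classical
  rw [toLpLin_mul_same, LinearMap.comp_apply, toEuclideanLin_conjTranspose_eq_adjoint,
    LinearMap.adjoint_inner_right, inner_self_eq_norm_sq]

lemma norm_toEuclideanLin_sq_add_sq {m' : Type*} [Fintype m'] {C : Matrix m n ℂ}
    {B : Matrix m' n ℂ} {c : ℝ} (h : Cᴴ * C + Bᴴ * B = (c : ℂ) • 1) (v : EuclideanSpace ℂ n) :
    ‖toEuclideanLin C v‖ ^ 2 + ‖toEuclideanLin B v‖ ^ 2 = c * ‖v‖ ^ 2 := by
  have hsum : toEuclideanLin (Cᴴ * C) v + toEuclideanLin (Bᴴ * B) v = (c : ℂ) • v := by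
    rw [← LinearMap.add_apply, ← map_add, h, map_smul, toLpLin_one]
    rfl
  rw [norm_toEuclideanLin_sq, norm_toEuclideanLin_sq, ← map_add, ← inner_add_right, hsum,
    inner_smul_right, ← inner_self_eq_norm_sq (𝕜 := ℂ)]
  exact Complex.re_ofReal_mul _ _

lemma norm_toEuclideanLin_fromRows_sq {m' : Type*} [Fintype m'] (A : Matrix m n ℂ)
    (B : Matrix m' n ℂ) (v : EuclideanSpace ℂ n) :
    ‖toEuclideanLin (fromRows A B) v‖ ^ 2
      = ‖toEuclideanLin A v‖ ^ 2 + ‖toEuclideanLin B v‖ ^ 2 := by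
  simp only [EuclideanSpace.norm_sq_eq, Fintype.sum_sum_type]
  rfl

lemma specNorm_le_specNorm_fromRows_right {m' : Type*} [Fintype m'] (A : Matrix m n ℂ)
    (B : Matrix m' n ℂ) : specNorm B ≤ specNorm (fromRows A B) := by
  refine specNorm_le_of_forall_norm_le (norm_nonneg _) fun v =>
    le_trans ?_ (norm_toEuclideanLin_le _ v)
  refine (pow_le_pow_iff_left₀ (norm_nonneg _) (norm_nonneg _) two_ne_zero).1 ?_
  rw [norm_toEuclideanLin_fromRows_sq]
  exact le_add_of_nonneg_left (sq_nonneg _)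

lemma specNorm_mul_inv_le_of_forall_norm_le {A : Matrix m n ℂ} {C : Matrix n n ℂ} (hC : IsUnit C)
    {c : ℝ} (hc : 0 ≤ c) (h : ∀ u, ‖toEuclideanLin A u‖ ≤ c * ‖toEuclideanLin C u‖) :
    specNorm (A * C⁻¹) ≤ c := by
  refine specNorm_le_of_forall_norm_le hc fun v => ?_
  have hv : toEuclideanLin C (toEuclideanLin C⁻¹ v) = v := by
    rw [← LinearMap.comp_apply, ← toLpLin_mul_same,
      mul_nonsing_inv C ((isUnit_iff_isUnit_det C).1 hC), toLpLin_one, LinearMap.id_apply]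
  calc ‖toEuclideanLin (A * C⁻¹) v‖ = ‖toEuclideanLin A (toEuclideanLin C⁻¹ v)‖ := by
        rw [toLpLin_mul_same, LinearMap.comp_apply]
    _ ≤ c * ‖toEuclideanLin C (toEuclideanLin C⁻¹ v)‖ := h _
    _ = c * ‖v‖ := by rw [hv]

lemma specNorm_mul_inv_le_div {m' : Type*} [Fintype m'] (A : Matrix m n ℂ) (B : Matrix m' n ℂ)
    {C : Matrix n n ℂ} (hC : IsUnit C) {γ : ℝ} (hγ : 0 < γ)
    (hCB : Cᴴ * C + Bᴴ * B = ((γ ^ 2 : ℝ) : ℂ) • 1) (hs : specNorm (fromRows A B) ≤ γ) :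
    specNorm (A * C⁻¹) ≤ specNorm (fromRows A B) / γ := by
  set s := specNorm (fromRows A B)
  have hs0 : 0 ≤ s := norm_nonneg _
  refine specNorm_mul_inv_le_of_forall_norm_le hC (div_nonneg hs0 hγ.le) fun u => ?_
  have hAB : ‖toEuclideanLin A u‖ ^ 2 + ‖toEuclideanLin B u‖ ^ 2 ≤ s ^ 2 * ‖u‖ ^ 2 := by
    rw [← norm_toEuclideanLin_fromRows_sq, ← mul_pow]
    exact pow_le_pow_left₀ (norm_nonneg _) (norm_toEuclideanLin_le _ u) 2
  have hCu := norm_toEuclideanLin_sq_add_sq hCB u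
  have hsq : (γ * ‖toEuclideanLin A u‖) ^ 2 ≤ (s * ‖toEuclideanLin C u‖) ^ 2 := by
    nlinarith [mul_le_mul_of_nonneg_left hAB (sq_nonneg γ),
      mul_nonneg (sub_nonneg.2 (pow_le_pow_left₀ hs0 hs 2)) (sq_nonneg ‖toEuclideanLin B u‖)]
  have hle := (pow_le_pow_iff_left₀ (by positivity) (by positivity) two_ne_zero).1 hsq
  rw [div_mul_eq_mul_div, le_div_iff₀ hγ]
  linarith

end SpecNorm

theorem Continuous.matrix_fromRows {X R m₁ m₂ n : Type*} [TopologicalSpace X] [TopologicalSpace R]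
    {A : X → Matrix m₁ n R} {B : X → Matrix m₂ n R} (hA : Continuous A) (hB : Continuous B) :
    Continuous fun x => fromRows (A x) (B x) :=
  continuous_matrix fun i j => by
    rcases i with i | i
    exacts [hA.matrix_elem i j, hB.matrix_elem i j]

lemma specNorm_le_hinfNorm {m n : Type*} [Fintype m] [Fintype n] [DecidableEq n]
    {F : Circle → Matrix m n ℂ} (hF : Continuous F) (z : Circle) : specNorm (F z) ≤ hinfNorm F :=
  le_ciSup (isCompact_range (continuous_specNorm.comp hF)).bddAbove z

theorem hinfNorm_stacked_lt_imp_general (p q k : ℕ)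
    (F : Circle → Matrix (Fin p) (Fin k) ℂ) (hF : Continuous F)
    (G : Circle → Matrix (Fin q) (Fin k) ℂ) (hG : Continuous G)
    (γ : ℝ) (hγ : 0 < γ)
    (Go : Circle → Matrix (Fin k) (Fin k) ℂ)
    (hGo : ∀ z, IsUnit (Go z))
    (hfact : ∀ z, (Go z)ᴴ * Go z
      = ((γ : ℂ) ^ 2) • (1 : Matrix (Fin k) (Fin k) ℂ) - (G z)ᴴ * G z)
    (h : hinfNorm (fun z => Matrix.fromRows (F z) (G z)) < γ) :
    hinfNorm G < γ ∧ hinfNorm (fun z => F z * (Go z)⁻¹) < 1 := by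
  set M := fun z => fromRows (F z) (G z)
  have hM : ∀ z, specNorm (M z) ≤ hinfNorm M := specNorm_le_hinfNorm (hF.matrix_fromRows hG)
  have hCB : ∀ z, (Go z)ᴴ * Go z + (G z)ᴴ * G z = ((γ ^ 2 : ℝ) : ℂ) • 1 := fun z => by
    rw [hfact z, sub_add_cancel, Complex.ofReal_pow]
  refine ⟨(ciSup_le fun z => (specNorm_le_specNorm_fromRows_right _ _).trans (hM z)).trans_lt h, ?_⟩
  calc hinfNorm (fun z => F z * (Go z)⁻¹) ≤ hinfNorm M / γ := ciSup_le fun z =>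
        (specNorm_mul_inv_le_div _ _ (hGo z) hγ (hCB z) ((hM z).trans h.le)).trans
          (div_le_div_of_nonneg_right (hM z) hγ.le)
    _ < 1 := (div_lt_one hγ).2 h

/-- If `‖[F; G]‖∞ < γ` and, pointwise on the circle, `G_o(z)` is invertible with
`G_o(z)ᴴ G_o(z) = γ²·I − G(z)ᴴ G(z)`, then `‖G‖∞ < γ` and `‖F G_o⁻¹‖∞ < 1`. -/
theorem hinfNorm_stacked_lt_imp (p q k : ℕ)
    (F : Circle → Matrix (Fin p) (Fin k) ℂ) (hF : Continuous F)
    (G : Circle → Matrix (Fin q) (Fin k) ℂ) (hG : Continuous G)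
    (γ : ℝ) (hγ : 0 < γ)
    (Go : Circle → Matrix (Fin k) (Fin k) ℂ) (hGoc : Continuous Go)
    (hGo : ∀ z, IsUnit (Go z))
    (hfact : ∀ z, (Go z)ᴴ * Go z
      = ((γ : ℂ) ^ 2) • (1 : Matrix (Fin k) (Fin k) ℂ) - (G z)ᴴ * G z)
    (h : hinfNorm (fun z => Matrix.fromRows (F z) (G z)) < γ) :
    hinfNorm G < γ ∧ hinfNorm (fun z => F z * (Go z)⁻¹) < 1 :=
  hinfNorm_stacked_lt_imp_general p q k F hF G hG γ hγ Go hGo hfact h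
end
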